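/- (Andreani–Echagüe–Schuverdt) Let x* be a local minimizer of (NLP) such that the rank of the Jacobian matrix J(x) ∈ ℝ^{(m+q)×n} is constant for all x in a neighborhood of x*, where q is the number of active inequality constraints at x*. Then every Lagrange multiplier (λ,μ) ∈ Λ(x*) (if any exists) satisfies dᵀ∇²ₓₓL(x*,λ,μ)d ≥ 0 for all d ∈ S(x*). -/

import Mathlib

open scoped BigOperators Pointwise
open Matrix

attribute [local instance] Classical.propDecidable

noncomputable section

/-- The gradient vector of `φ` at `x` (the vector of partial derivatives). -/
def gradVec {n : ℕ} (φ : (Fin n → ℝ) → ℝ) (x : Fin n → ℝ) : Fin n → ℝ :=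
  fun k => fderiv ℝ φ x (Pi.single k 1)

/-- The quadratic form `d ↦ dᵀ ∇²φ(x) d` of the Hessian of `φ` at `x`. -/
def hessQ {n : ℕ} (φ : (Fin n → ℝ) → ℝ) (x d : Fin n → ℝ) : ℝ :=
  iteratedFDeriv ℝ 2 φ x ![d, d]

/-- Feasibility for the problem (NLP). -/
def Feas {n m p : ℕ} (h : Fin m → (Fin n → ℝ) → ℝ) (g : Fin p → (Fin n → ℝ) → ℝ)
    (x : Fin n → ℝ) : Prop :=
  (∀ i, h i x = 0) ∧ ∀ j, g j x ≤ 0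

/-- The Lagrangian of (NLP). -/
def Lagr {n m p : ℕ} (f : (Fin n → ℝ) → ℝ) (h : Fin m → (Fin n → ℝ) → ℝ)
    (g : Fin p → (Fin n → ℝ) → ℝ) (lam : Fin m → ℝ) (mu : Fin p → ℝ) (x : Fin n → ℝ) : ℝ :=
  f x + ∑ i, lam i * h i x + ∑ j, mu j * g j x

/-- `(lam, mu)` is a Lagrange multiplier at `xs`, i.e. `(lam, mu) ∈ Λ(xs)`. -/
def IsLagMult {n m p : ℕ} (f : (Fin n → ℝ) → ℝ) (h : Fin m → (Fin n → ℝ) → ℝ)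
    (g : Fin p → (Fin n → ℝ) → ℝ) (xs : Fin n → ℝ) (lam : Fin m → ℝ) (mu : Fin p → ℝ) : Prop :=
  (∀ j, 0 ≤ mu j) ∧ fderiv ℝ (Lagr f h g lam mu) xs = 0 ∧ ∀ j, mu j * g j xs = 0

/-- The Mangasarian-Fromovitz constraint qualification at `xs`. -/
def MFCQ {n m p : ℕ} (h : Fin m → (Fin n → ℝ) → ℝ) (g : Fin p → (Fin n → ℝ) → ℝ)
    (xs : Fin n → ℝ) : Prop :=
  LinearIndependent ℝ (fun i : Fin m => fderiv ℝ (h i) xs) ∧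
  ∃ d : Fin n → ℝ, (∀ i, fderiv ℝ (h i) xs d = 0) ∧
    ∀ j, g j xs = 0 → fderiv ℝ (g j) xs d < 0

/-- Membership in the critical cone `C(xs)`. -/
def critCone {n m p : ℕ} (f : (Fin n → ℝ) → ℝ) (h : Fin m → (Fin n → ℝ) → ℝ)
    (g : Fin p → (Fin n → ℝ) → ℝ) (xs d : Fin n → ℝ) : Prop :=
  fderiv ℝ f xs d = 0 ∧ (∀ i, fderiv ℝ (h i) xs d = 0) ∧
    ∀ j, g j xs = 0 → fderiv ℝ (g j) xs d ≤ 0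

/-- Membership in the critical subspace `S(xs)`. -/
def critSub {n m p : ℕ} (h : Fin m → (Fin n → ℝ) → ℝ) (g : Fin p → (Fin n → ℝ) → ℝ)
    (xs d : Fin n → ℝ) : Prop :=
  (∀ i, fderiv ℝ (h i) xs d = 0) ∧ ∀ j, g j xs = 0 → fderiv ℝ (g j) xs d = 0

/-- The Jacobian matrix `J(x)` of equality and active inequality constraints
(activity taken at the base point `xs`). -/
def Jac {n m p : ℕ} (h : Fin m → (Fin n → ℝ) → ℝ) (g : Fin p → (Fin n → ℝ) → ℝ)
    (xs x : Fin n → ℝ) : Matrix (Fin m ⊕ {j : Fin p // g j xs = 0}) (Fin n) ℝ :=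
  Matrix.of fun i k =>
    Sum.elim (fun i' => fderiv ℝ (h i') x (Pi.single k 1))
      (fun j' => fderiv ℝ (g j'.1) x (Pi.single k 1)) i

/-- A first-order cone: the (direct) sum of a linear subspace and a ray. -/
def IsFirstOrderCone {n : ℕ} (K : Set (Fin n → ℝ)) : Prop :=
  ∃ (W : Submodule ℝ (Fin n → ℝ)) (d0 : Fin n → ℝ),
    K = {x | ∃ w ∈ W, ∃ r : ℝ, 0 ≤ r ∧ x = w + r • d0}

/-- The rank of a family of vectors: the dimension of its linear span. -/
def famRank {ι : Type*} {n : ℕ} (v : ι → (Fin n → ℝ)) : ℕ :=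
  Module.finrank ℝ (Submodule.span ℝ (Set.range v))

/-!
Constant rank turns every critical direction into a feasible curve. Choose equality and active
inequality constraints whose gradients at `xs` form a basis of the span of all their gradients. By
the implicit function theorem there is a `C²` curve `γ` with `γ 0 = xs` and `γ' 0 = d` along which
the chosen constraints vanish. Near `xs` the chosen gradients remain independent, and since the rank
is constant they still span all the gradients. So along `γ` the derivative of every other active
constraint is a combination of zeros. Hence all active constraints vanish on `γ`, and `γ` is
feasible near `0`. There the Lagrangian agrees with `f`, so `s ↦ L (γ s)` has a local minimum at
`0`. Its second derivative at `0` is `∇²L(d, d) + ∇L · γ''(0) = ∇²L(d, d)`, which is therefore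
nonnegative.
-/

open Filter Topology Set Submodule Module

section General

variable {E : Type*} [NormedAddCommGroup E] [NormedSpace ℝ E]

theorem IsLocalMin.deriv_deriv_nonneg {f : ℝ → ℝ} {x₀ : ℝ} (hmin : IsLocalMin f x₀)
    (hc : ContinuousAt f x₀) : 0 ≤ deriv (deriv f) x₀ := by
  by_contra! hneg
  have hmax := isLocalMax_of_deriv_deriv_neg hneg hmin.deriv_eq_zero hc
  have hconst : f =ᶠ[𝓝 x₀] fun _ => f x₀ :=
    (hmin.and hmax).mono fun x hx => le_antisymm hx.2 hx.1
  have : deriv (deriv f) x₀ = 0 := by simp [hconst.deriv.deriv_eq]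
  exact hneg.ne this

theorem deriv_deriv_comp {F : Type*} [NormedAddCommGroup F] [NormedSpace ℝ F] {L : E → F}
    {γ : ℝ → E} {t : ℝ} (hL : ContDiffAt ℝ 2 L (γ t)) (hγ : ContDiffAt ℝ 2 γ t) :
    deriv (deriv (L ∘ γ)) t =
      fderiv ℝ (fderiv ℝ L) (γ t) (deriv γ t) (deriv γ t) +
        fderiv ℝ L (γ t) (deriv (deriv γ) t) := by
  have hL' : ∀ᶠ s in 𝓝 t, DifferentiableAt ℝ L (γ s) :=
    hγ.continuousAt.eventually ((hL.eventually (by simp)).mono fun _ h =>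
      h.differentiableAt (by simp))
  have hγ' : ∀ᶠ s in 𝓝 t, DifferentiableAt ℝ γ s :=
    (hγ.eventually (by simp)).mono fun _ h => h.differentiableAt (by simp)
  have hchain : deriv (L ∘ γ) =ᶠ[𝓝 t] fun s => fderiv ℝ L (γ s) (deriv γ s) :=
    (hL'.and hγ').mono fun s hs => fderiv_comp_deriv s hs.1 hs.2
  have hDL : HasDerivAt (fun s => fderiv ℝ L (γ s))
      (fderiv ℝ (fderiv ℝ L) (γ t) (deriv γ t)) t :=
    ((hL.fderiv_right (m := 1) (by norm_num)).differentiableAt (by simp)).hasFDerivAt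
      |>.comp_hasDerivAt t (hγ.differentiableAt (by simp)).hasDerivAt
  have hDγ : HasDerivAt (deriv γ) (deriv (deriv γ) t) t :=
    (((hγ.fderiv_right (m := 1) (by norm_num)).differentiableAt (by simp)).clm_apply
      (differentiableAt_const (1 : ℝ))).hasDerivAt
  rw [hchain.deriv_eq]
  exact (hDL.clm_apply hDγ).deriv

theorem fderiv_fderiv_apply_nonneg_of_isLocalMin_comp {L : E → ℝ} {γ : ℝ → E} {t : ℝ}
    (hL : ContDiffAt ℝ 2 L (γ t)) (hγ : ContDiffAt ℝ 2 γ t) (hcrit : fderiv ℝ L (γ t) = 0)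
    (hmin : IsLocalMin (L ∘ γ) t) :
    0 ≤ fderiv ℝ (fderiv ℝ L) (γ t) (deriv γ t) (deriv γ t) := by
  have := hmin.deriv_deriv_nonneg (hL.continuousAt.comp hγ.continuousAt)
  simpa [deriv_deriv_comp hL hγ, hcrit] using this

theorem exists_curve_of_comp_rightInverse {F : Type*} [NormedAddCommGroup F] [NormedSpace ℝ F]
    [CompleteSpace F] {k : WithTop ℕ∞} (hk : k ≠ 0) {G : E → F} {x₀ : E}
    (hG : ContDiffAt ℝ k G x₀) {T : F →L[ℝ] E} (hT : (fderiv ℝ G x₀).comp T = .id ℝ F) {d : E}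
    (hd : fderiv ℝ G x₀ d = 0) :
    ∃ γ : ℝ → E, ContDiffAt ℝ k γ 0 ∧ γ 0 = x₀ ∧ deriv γ 0 = d ∧
      ∀ᶠ s in 𝓝 0, G (γ s) = G x₀ := by
  -- solve `G (x₀ + s • d + T y) = G x₀` for `y` as a function of `s`
  set P : ℝ × F →L[ℝ] E := (ContinuousLinearMap.toSpanSingleton ℝ d).coprod T
  set Φ : ℝ × F → F := fun q => G (x₀ + P q)
  have hP0 : x₀ + P (0, 0) = x₀ := by rw [Prod.mk_zero_zero, map_zero, add_zero]
  have hG' : ContDiffAt ℝ k G (x₀ + P (0, 0)) := by rwa [hP0]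
  have hΦ : ContDiffAt ℝ k Φ (0, 0) :=
    hG'.comp (0, 0) (contDiffAt_const.add P.contDiff.contDiffAt)
  have hΦ' : fderiv ℝ Φ (0, 0) = (fderiv ℝ G x₀).comp P := by
    rw [← hP0]
    exact ((hG'.differentiableAt hk).hasFDerivAt.comp (0, 0) (P.hasFDerivAt.const_add x₀)).fderiv
  have hinv : (fderiv ℝ Φ (0, 0) ∘L .inr ℝ ℝ F).IsInvertible := by
    rw [hΦ', ContinuousLinearMap.comp_assoc, ContinuousLinearMap.coprod_comp_inr, hT]
    exact ContinuousLinearMap.isInvertible_equiv (f := ContinuousLinearEquiv.refl ℝ F)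
  have hinl : fderiv ℝ Φ (0, 0) ∘L .inl ℝ ℝ F = 0 := by
    rw [hΦ', ContinuousLinearMap.comp_assoc, ContinuousLinearMap.coprod_comp_inl]
    ext
    simp [hd]
  set ψ := hΦ.implicitFunction hk hinv
  have hψ0 : ψ 0 = 0 := hΦ.implicitFunction_apply_self hk hinv
  have hψ' : HasFDerivAt ψ (0 : ℝ →L[ℝ] F) 0 := by
    simpa [hinl] using (hΦ.hasStrictFDerivAt_implicitFunction hk hinv).hasFDerivAt
  refine ⟨fun s => x₀ + P (s, ψ s), ?_, by simp [hψ0, hP0], ?_, ?_⟩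
  · exact contDiffAt_const.add (P.contDiff.comp_contDiffAt 0
      (contDiffAt_id.prodMk (hΦ.contDiffAt_implicitFunction hk hinv)))
  · have hpath : HasDerivAt (fun s => (s, ψ s)) ((1 : ℝ), (0 : F)) 0 :=
      (hasDerivAt_id 0).prodMk (by simpa using hψ'.hasDerivAt)
    simpa [P] using ((P.hasFDerivAt.comp_hasDerivAt 0 hpath).const_add x₀).deriv
  · simpa [Φ, hP0] using hΦ.eventually_apply_implicitFunction hk hinv

theorem eventually_eq_of_eventually_hasDerivAt_zero {G : Type*} [NormedAddCommGroup G]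
    [NormedSpace ℝ G] {f : ℝ → G} {t : ℝ} (h : ∀ᶠ s in 𝓝 t, HasDerivAt f 0 s) :
    ∀ᶠ s in 𝓝 t, f s = f t := by
  obtain ⟨ε, hε, hball⟩ := Metric.eventually_nhds_iff_ball.1 h
  filter_upwards [Metric.ball_mem_nhds t hε] with s hs
  exact Metric.isOpen_ball.is_const_of_deriv_eq_zero (convex_ball t ε).isPreconnected
    (fun x hx => (hball x hx).differentiableAt.differentiableWithinAt)
    (fun x hx => (hball x hx).deriv) hs (Metric.mem_ball_self hε)

theorem eventually_comp_eq_of_fderiv_mem_span {ι : Type*} {F : E → ℝ} {c : ι → E → ℝ}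
    {γ : ℝ → E} {t : ℝ} (hF : Differentiable ℝ F) (hc : ∀ i, Differentiable ℝ (c i))
    (hγ : ∀ᶠ s in 𝓝 t, DifferentiableAt ℝ γ s) (hcγ : ∀ᶠ s in 𝓝 t, ∀ i, c i (γ s) = 0)
    (hspan : ∀ᶠ s in 𝓝 t, fderiv ℝ F (γ s) ∈ span ℝ (range fun i => fderiv ℝ (c i) (γ s))) :
    ∀ᶠ s in 𝓝 t, F (γ s) = F (γ t) := by
  refine eventually_eq_of_eventually_hasDerivAt_zero (f := F ∘ γ) ?_
  filter_upwards [hγ, hcγ.eventually_nhds, hspan] with s hγs hcs hFs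
  have hker : ∀ i, fderiv ℝ (c i) (γ s) ∈
      LinearMap.ker (ContinuousLinearMap.apply ℝ ℝ (deriv γ s)).toLinearMap := fun i =>
    LinearMap.mem_ker.2 <| ((hc i).differentiableAt.hasFDerivAt.comp_hasDerivAt s
      hγs.hasDerivAt).unique
        ((hasDerivAt_const s 0).congr_of_eventuallyEq (hcs.mono fun _ h => h i))
  have hFker : fderiv ℝ F (γ s) (deriv γ s) = 0 :=
    LinearMap.mem_ker.1 (span_le.2 (range_subset_iff.2 hker) hFs)
  simpa [hFker] using hF.differentiableAt.hasFDerivAt.comp_hasDerivAt s hγs.hasDerivAt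

theorem ContinuousLinearMap.range_pi_eq_top_of_linearIndependent {κ : Type*} [Finite κ]
    {φ : κ → E →L[ℝ] ℝ} (hφ : LinearIndependent ℝ φ) :
    LinearMap.range (ContinuousLinearMap.pi φ).toLinearMap = ⊤ := by
  have hcoe : LinearIndependent ℝ fun j x => φ j x :=
    hφ.map' (LinearMap.pi fun x => (ContinuousLinearMap.apply ℝ ℝ x).toLinearMap)
      (LinearMap.ker_eq_bot.2 fun _ _ h => ContinuousLinearMap.ext (congrFun h))
  rw [← span_flip_eq_top_iff_linearIndependent, eq_top_iff] at hcoe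
  exact eq_top_iff.2 (hcoe.trans (span_le.2 fun _ ⟨x, hx⟩ => ⟨x, hx⟩))

theorem eventually_span_comp_eq_span {X V : Type*} [TopologicalSpace X] [NormedAddCommGroup V]
    [NormedSpace ℝ V] [FiniteDimensional ℝ V] {ι κ : Type*} [Fintype κ] {v : X → ι → V}
    {x₀ : X} (hv : ∀ i, ContinuousAt (fun x => v x i) x₀) {a : κ → ι}
    (hind : LinearIndependent ℝ (v x₀ ∘ a))
    (hspan : span ℝ (range (v x₀ ∘ a)) = span ℝ (range (v x₀)))
    (hrank : ∀ᶠ x in 𝓝 x₀,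
      finrank ℝ (span ℝ (range (v x))) ≤ finrank ℝ (span ℝ (range (v x₀)))) :
    ∀ᶠ x in 𝓝 x₀, span ℝ (range (v x ∘ a)) = span ℝ (range (v x)) := by
  have hind' : ∀ᶠ x in 𝓝 x₀, LinearIndependent ℝ (v x ∘ a) :=
    (tendsto_pi_nhds.2 fun j => hv (a j)).eventually hind.eventually
  filter_upwards [hind', hrank] with x hx hrx
  refine eq_of_le_of_finrank_le (span_mono (range_comp_subset_range a (v x))) ?_
  rwa [finrank_span_eq_card hx, ← finrank_span_eq_card hind, hspan]

theorem exists_curve_of_finrank_span_fderiv_le [FiniteDimensional ℝ E] {ι : Type*} [Fintype ι]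
    {k : WithTop ℕ∞} (hk : 1 ≤ k) {c : ι → E → ℝ} (hc : ∀ i, ContDiff ℝ k (c i)) {x₀ : E}
    (hc0 : ∀ i, c i x₀ = 0)
    (hrank : ∀ᶠ x in 𝓝 x₀, finrank ℝ (span ℝ (range fun i => fderiv ℝ (c i) x)) ≤
      finrank ℝ (span ℝ (range fun i => fderiv ℝ (c i) x₀)))
    {d : E} (hd : ∀ i, fderiv ℝ (c i) x₀ d = 0) :
    ∃ γ : ℝ → E, ContDiffAt ℝ k γ 0 ∧ γ 0 = x₀ ∧ deriv γ 0 = d ∧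
      ∀ᶠ s in 𝓝 0, ∀ i, c i (γ s) = 0 := by
  have hk0 : k ≠ 0 := (zero_lt_one.trans_le hk).ne'
  obtain ⟨κ, a, ha, hspan, hind⟩ := exists_linearIndependent' ℝ fun i => fderiv ℝ (c i) x₀
  have : Finite κ := Finite.of_injective a ha
  cases nonempty_fintype κ
  set G : E → κ → ℝ := fun x j => c (a j) x
  have hG' : fderiv ℝ G x₀ = ContinuousLinearMap.pi fun j => fderiv ℝ (c (a j)) x₀ :=
    (hasFDerivAt_pi.2 fun j => ((hc (a j)).differentiable hk0 x₀).hasFDerivAt).fderiv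
  obtain ⟨T, hT⟩ := (fderiv ℝ G x₀).exists_rightInverse_of_surjective
    (by rw [hG']; exact ContinuousLinearMap.range_pi_eq_top_of_linearIndependent hind)
  obtain ⟨γ, hγ, hγ0, hγd, hGγ⟩ := exists_curve_of_comp_rightInverse hk0
    (contDiff_pi.2 fun j => hc (a j)).contDiffAt hT (by rw [hG']; exact funext fun j => hd (a j))
  refine ⟨γ, hγ, hγ0, hγd, eventually_all.2 fun i => ?_⟩
  have hγx₀ : Tendsto γ (𝓝 0) (𝓝 x₀) := hγ0 ▸ hγ.continuousAt.tendsto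
  have hnear := hγx₀.eventually <| eventually_span_comp_eq_span
    (v := fun x i => fderiv ℝ (c i) x) (fun i => ((hc i).continuous_fderiv hk0).continuousAt)
    hind hspan hrank
  have hci := eventually_comp_eq_of_fderiv_mem_span (F := c i) (c := fun j => c (a j))
    ((hc i).differentiable hk0) (fun j => (hc (a j)).differentiable hk0)
    (((hγ.of_le hk).eventually (by simp)).mono fun _ h => h.differentiableAt one_ne_zero)
    (hGγ.mono fun s hs j => (congrFun hs j).trans (hc0 (a j)))
    (hnear.mono fun s hs => by
      change _ ∈ span ℝ (range ((fun i => fderiv ℝ (c i) (γ s)) ∘ a))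
      rw [hs]
      exact subset_span ⟨i, rfl⟩)
  filter_upwards [hci] with s hs
  rw [hs, hγ0, hc0]

end General

theorem Matrix.rank_of_apply_single_eq_finrank_span {n : ℕ} {ι : Type*} [Fintype ι]
    (φ : ι → (Fin n → ℝ) →L[ℝ] ℝ) :
    (Matrix.of fun i k => φ i (Pi.single k 1)).rank = finrank ℝ (span ℝ (range φ)) := by
  rw [rank_eq_finrank_span_row]
  have : (Matrix.of fun i k => φ i (Pi.single k 1)).row =
      ((ContinuousLinearEquiv.piRing (𝕜 := ℝ) (E := ℝ) (Fin n)).toLinearEquiv :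
        ((Fin n → ℝ) →L[ℝ] ℝ) →ₗ[ℝ] Fin n → ℝ) ∘ φ := rfl
  rw [this, range_comp, span_image, LinearEquiv.finrank_map_eq]

section NLP

variable {n m p : ℕ} {f : (Fin n → ℝ) → ℝ} {h : Fin m → (Fin n → ℝ) → ℝ}
  {g : Fin p → (Fin n → ℝ) → ℝ} {xs : Fin n → ℝ}

theorem contDiff_Lagr {k : WithTop ℕ∞} (hf : ContDiff ℝ k f) (hh : ∀ i, ContDiff ℝ k (h i))
    (hg : ∀ j, ContDiff ℝ k (g j)) (lam : Fin m → ℝ) (mu : Fin p → ℝ) :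
    ContDiff ℝ k (Lagr f h g lam mu) := by
  unfold Lagr
  fun_prop

theorem Lagr_eq_of_active_eq_zero {lam : Fin m → ℝ} {mu : Fin p → ℝ}
    (hcompl : ∀ j, mu j * g j xs = 0) {x : Fin n → ℝ} (hhx : ∀ i, h i x = 0)
    (hgx : ∀ j, g j xs = 0 → g j x = 0) : Lagr f h g lam mu x = f x := by
  have hmu : ∀ j, mu j * g j x = 0 := fun j => by
    rcases mul_eq_zero.1 (hcompl j) with hμ | hgj
    · rw [hμ, zero_mul]
    · rw [hgx j hgj, mul_zero]
  simp [Lagr, hhx, hmu]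

theorem eventually_feas_of_active_eq_zero (hg : ∀ j, ContinuousAt (g j) xs)
    (hfeas : Feas h g xs) :
    ∀ᶠ x in 𝓝 xs, (∀ i, h i x = 0) → (∀ j, g j xs = 0 → g j x = 0) → Feas h g x := by
  have hinact : ∀ᶠ x in 𝓝 xs, ∀ j, g j xs ≠ 0 → g j x < 0 := eventually_all.2 fun j => by
    by_cases hj : g j xs = 0
    · exact Eventually.of_forall fun _ hne => absurd hj hne
    · exact ((hg j).eventually (gt_mem_nhds (lt_of_le_of_ne (hfeas.2 j) hj))).mono
        fun _ hx _ => hx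
  filter_upwards [hinact] with x hx hhx hgx
  refine ⟨hhx, fun j => ?_⟩
  by_cases hj : g j xs = 0
  · exact (hgx j hj).le
  · exact (hx j hj).le

theorem isLocalMin_Lagr_comp_of_active_eq_zero (hg : ∀ j, ContinuousAt (g j) xs)
    (hfeas : Feas h g xs) (hmin : IsLocalMinOn f {x | Feas h g x} xs) {lam : Fin m → ℝ}
    {mu : Fin p → ℝ} (hcompl : ∀ j, mu j * g j xs = 0) {γ : ℝ → Fin n → ℝ}
    (hγ : ContinuousAt γ 0) (hγ0 : γ 0 = xs) (hhγ : ∀ᶠ s in 𝓝 0, ∀ i, h i (γ s) = 0)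
    (hgγ : ∀ᶠ s in 𝓝 0, ∀ j, g j xs = 0 → g j (γ s) = 0) :
    IsLocalMin (Lagr f h g lam mu ∘ γ) 0 := by
  have hγx : Tendsto γ (𝓝 0) (𝓝 xs) := hγ0 ▸ hγ.tendsto
  have hfeasγ : ∀ᶠ s in 𝓝 0, Feas h g (γ s) := by
    filter_upwards [hhγ, hgγ, hγx.eventually (eventually_feas_of_active_eq_zero hg hfeas)]
      with s hhs hgs hfs
    exact hfs hhs hgs
  have hminγ := (tendsto_nhdsWithin_iff.2 ⟨hγx, hfeasγ⟩).eventually hmin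
  filter_upwards [hhγ, hgγ, hminγ] with s hhs hgs hfs
  rw [Function.comp_apply, Function.comp_apply, hγ0, Lagr_eq_of_active_eq_zero hcompl hhs hgs,
    Lagr_eq_of_active_eq_zero hcompl hfeas.1 fun _ hj => hj]
  exact hfs

end NLP

/-- Andreani–Echagüe–Schuverdt: under constant rank of the Jacobian in a
neighborhood of a local minimizer, every Lagrange multiplier satisfies WSOC. -/
theorem stmt8 {n m p : ℕ} (f : (Fin n → ℝ) → ℝ) (h : Fin m → (Fin n → ℝ) → ℝ)
    (g : Fin p → (Fin n → ℝ) → ℝ)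
    (hf : ContDiff ℝ 2 f) (hh : ∀ i, ContDiff ℝ 2 (h i)) (hg : ∀ j, ContDiff ℝ 2 (g j))
    (xs : Fin n → ℝ) (hfeas : Feas h g xs)
    (hmin : IsLocalMinOn f {x | Feas h g x} xs)
    (hconst : ∀ᶠ x in nhds xs, (Jac h g xs x).rank = (Jac h g xs xs).rank) :
    ∀ (lam : Fin m → ℝ) (mu : Fin p → ℝ), IsLagMult f h g xs lam mu →
      ∀ d, critSub h g xs d → 0 ≤ hessQ (Lagr f h g lam mu) xs d := by
  intro lam mu hLM d hd
  set c : Fin m ⊕ {j : Fin p // g j xs = 0} → (Fin n → ℝ) → ℝ := Sum.elim h fun j => g j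
  have hJac : ∀ x, Jac h g xs x = Matrix.of fun i k => fderiv ℝ (c i) x (Pi.single k 1) := by
    intro x
    ext (i | j) k <;> rfl
  obtain ⟨γ, hγ, hγ0, hγd, hcγ⟩ := exists_curve_of_finrank_span_fderiv_le (k := 2)
    (by norm_num) (c := c) (by rintro (i | j); exacts [hh i, hg j])
    (by rintro (i | j); exacts [hfeas.1 i, j.2])
    (hconst.mono fun x hx => by
      rw [← Matrix.rank_of_apply_single_eq_finrank_span,
        ← Matrix.rank_of_apply_single_eq_finrank_span, ← hJac, ← hJac, hx])
    (by rintro (i | j); exacts [hd.1 i, hd.2 j j.2])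
  have hLγ := isLocalMin_Lagr_comp_of_active_eq_zero (lam := lam)
    (fun j => (hg j).continuous.continuousAt) hfeas hmin hLM.2.2 hγ.continuousAt hγ0
    (hcγ.mono fun s hs i => hs (.inl i)) (hcγ.mono fun s hs j hj => hs (.inr ⟨j, hj⟩))
  have := fderiv_fderiv_apply_nonneg_of_isLocalMin_comp (contDiff_Lagr hf hh hg lam mu).contDiffAt
    hγ (by rw [hγ0]; exact hLM.2.1) hLγ
  rw [hγ0, hγd] at this
  simpa [hessQ, iteratedFDeriv_two_apply] using this
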